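/- Let f ≥ 0 and let λ be a partition. There exists a permutation lattice of order f with diagram λ if and only if |λ| ≤ f and f − |λ| is even. -/

import Mathlib

/-- `θ(k) = 1` if `k > 0` and `0` if `k < 0` (we also set it to `0` at `k = 0`,
a value never used since words have nonzero entries). -/
def theta (k : ℤ) : ℤ := if 0 < k then 1 else 0

/-- `hatCount w i k = #̂_{w^{(i)}}(k)`: the number of indices `1 ≤ j ≤ i` with `w j = k`
minus the number of indices `1 ≤ j ≤ i` with `w j = -k`.  A word of order `f` is
represented by a function `w : ℕ → ℤ`, its entries being `w 1, …, w f` (1-based). -/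
def hatCount (w : ℕ → ℤ) (i : ℕ) (k : ℤ) : ℤ :=
  (((Finset.Icc 1 i).filter fun j => w j = k).card : ℤ) -
    (((Finset.Icc 1 i).filter fun j => w j = -k).card : ℤ)

/-- `w : ℕ → ℤ` is a permutation lattice of order `f`: all entries `w 1, …, w f` are
nonzero, and for every prefix `w^{(i)}` (`1 ≤ i ≤ f`) the sequence
`k ↦ #̂_{w^{(i)}}(k)` (`k ≥ 1`) is weakly decreasing with nonnegative terms. -/
def IsPermLattice (f : ℕ) (w : ℕ → ℤ) : Prop :=
  (∀ i, 1 ≤ i → i ≤ f → w i ≠ 0) ∧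
  ∀ i, 1 ≤ i → i ≤ f → ∀ k : ℤ, 1 ≤ k →
    hatCount w i (k + 1) ≤ hatCount w i k ∧ 0 ≤ hatCount w i k

/-- The transpose word: `(w^t)_i = #̂_{w^{(i-1)}}(w_i) + θ(w_i)`. -/
def transposePL (w : ℕ → ℤ) : ℕ → ℤ := fun i => hatCount w (i - 1) (w i) + theta (w i)

/-!
Summing `#̂_w(k)` over all `k ≥ 1` counts every entry of `w` with its sign, so `|λ|` is the
number of positive entries minus the number of negative ones; as all `f` entries are nonzero,
`f - |λ|` is twice the number of negative entries.

Conversely, a word is built one letter at a time, keeping the shape of every prefix a partition.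
If `|λ| = f`, append the index `ℓ` of the last nonzero row of `λ` to a word of order `f - 1` for
`λ` with that box removed. Otherwise `|λ| ≤ f - 2`, and one appends `-1` to a word of order
`f - 1` for `λ` with a box added to its first row.
-/

open Finset

lemma hatCount_eq_sum (w : ℕ → ℤ) (i : ℕ) (k : ℤ) :
    hatCount w i k = ∑ j ∈ Icc 1 i, ((if w j = k then 1 else 0) - (if w j = -k then 1 else 0)) := by
  simp [hatCount, sum_sub_distrib, sum_boole]

lemma hatCount_succ (w : ℕ → ℤ) (i : ℕ) (k : ℤ) :
    hatCount w (i + 1) k =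
      hatCount w i k + (if w (i + 1) = k then 1 else 0) - (if w (i + 1) = -k then 1 else 0) := by
  rw [hatCount_eq_sum, hatCount_eq_sum, sum_Icc_succ_top (by omega)]
  ring

lemma hatCount_congr {w w' : ℕ → ℤ} {i : ℕ} (h : ∀ j, 1 ≤ j → j ≤ i → w j = w' j) (k : ℤ) :
    hatCount w i k = hatCount w' i k := by
  simp only [hatCount_eq_sum]
  refine sum_congr rfl fun j hj => ?_
  rw [h j (mem_Icc.1 hj).1 (mem_Icc.1 hj).2]

lemma sum_ite_eq_sub_ite_eq_neg_eq_sign {z : ℤ} {B : ℕ} (hz : z.natAbs ≤ B) :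
    ∑ r ∈ Icc 1 B, ((if z = (r : ℤ) then 1 else 0) - (if z = -(r : ℤ) then 1 else 0)) = z.sign := by
  obtain ⟨n, rfl | rfl⟩ := Int.eq_nat_or_neg z <;> rcases eq_or_ne n 0 with rfl | hn <;>
    simp_all [eq_comm (a := (0 : ℤ)), Nat.one_le_iff_ne_zero, Int.sign_natCast_of_ne_zero]

lemma sum_sign_eq_card_sub {ι : Type*} (s : Finset ι) (g : ι → ℤ) (hg : ∀ j ∈ s, g j ≠ 0) :
    ∑ j ∈ s, (g j).sign = s.card - 2 * #{j ∈ s | g j < 0} := by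
  have hsign : ∀ j ∈ s, (g j).sign = 1 - 2 * (if g j < 0 then 1 else 0) := by
    intro j hj
    rcases lt_trichotomy (g j) 0 with h | h | h
    · simp [h, Int.sign_eq_neg_one_of_neg h]
    · exact absurd h (hg j hj)
    · simp [Int.sign_eq_one_of_pos h, not_lt.2 h.le]
  rw [sum_congr rfl hsign, sum_sub_distrib, ← mul_sum, sum_boole]
  simp

lemma sum_hatCount_eq_sum_sign {w : ℕ → ℤ} {i B : ℕ}
    (hB : ∀ j ∈ Icc 1 i, (w j).natAbs ≤ B) :
    ∑ r ∈ Icc 1 B, hatCount w i r = ∑ j ∈ Icc 1 i, (w j).sign := by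
  simp only [hatCount_eq_sum]
  rw [sum_comm]
  exact sum_congr rfl fun j hj => sum_ite_eq_sub_ite_eq_neg_eq_sign (hB j hj)

lemma Finsupp.degree_eq_sum_Icc_one {lam : ℕ →₀ ℕ} (hlam0 : lam 0 = 0) {B : ℕ}
    (hB : ∀ r ∈ lam.support, r ≤ B) : lam.degree = ∑ r ∈ Icc 1 B, lam r := by
  refine Finsupp.sum_of_support_subset lam (fun r hr => mem_Icc.2 ⟨?_, hB r hr⟩)
    (fun _ n => n) fun _ _ => rfl
  by_contra h
  exact Finsupp.mem_support_iff.1 hr (by rw [show r = 0 by omega, hlam0])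

def IsPartition (lam : ℕ →₀ ℕ) : Prop :=
  lam 0 = 0 ∧ ∀ r, 1 ≤ r → lam (r + 1) ≤ lam r

namespace IsPartition

variable {lam : ℕ →₀ ℕ}

lemma add_single_one (hlam : IsPartition lam) : IsPartition (lam + Finsupp.single 1 1) := by
  refine ⟨by simp [hlam.1], fun r hr => ?_⟩
  have := hlam.2 r hr
  grind [Finsupp.add_apply]

lemma exists_eq_add_single (hlam : IsPartition lam) (hpos : 0 < lam.degree) :
    ∃ ℓ μ, 1 ≤ ℓ ∧ lam = μ + Finsupp.single ℓ 1 ∧ IsPartition μ := by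
  have hne : lam.support.Nonempty := by
    rw [Finset.nonempty_iff_ne_empty, Ne, Finsupp.support_eq_empty,
      ← Finsupp.degree_eq_zero_iff]
    omega
  set ℓ := lam.support.max' hne
  have hℓ : lam ℓ ≠ 0 := Finsupp.mem_support_iff.1 (lam.support.max'_mem hne)
  have hℓ1 : lam (ℓ + 1) = 0 := by
    by_contra h
    have := lam.support.le_max' _ (Finsupp.mem_support_iff.2 h)
    omega
  have hℓ0 : ℓ ≠ 0 := by rintro h; exact hℓ (h ▸ hlam.1)
  refine ⟨ℓ, lam - Finsupp.single ℓ 1, by omega,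
    (tsub_add_cancel_of_le (Finsupp.single_le_iff.2 (by omega))).symm,
    by simp [hlam.1, hℓ0.symm], fun r hr => ?_⟩
  have := hlam.2 r hr
  grind [Finsupp.tsub_apply]

end IsPartition

lemma hatCount_le_and_nonneg_of_eq {w : ℕ → ℤ} {i : ℕ} {lam : ℕ → ℕ}
    (hd : ∀ r : ℕ, 1 ≤ r → hatCount w i r = lam r) (hlam : ∀ r, 1 ≤ r → lam (r + 1) ≤ lam r) :
    ∀ k : ℤ, 1 ≤ k → hatCount w i (k + 1) ≤ hatCount w i k ∧ 0 ≤ hatCount w i k := by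
  intro k hk
  lift k to ℕ using by omega
  have := hlam k (by omega)
  rw [← Nat.cast_one, ← Nat.cast_add, hd k (by omega), hd (k + 1) (by omega)]
  omega

theorem IsPermLattice.update_succ {f : ℕ} {w : ℕ → ℤ} (hw : IsPermLattice f w)
    {x : ℤ} (hx : x ≠ 0) {ν lam : ℕ → ℕ} (hν : ∀ r : ℕ, 1 ≤ r → hatCount w f r = ν r)
    (hlam : ∀ r, 1 ≤ r → lam (r + 1) ≤ lam r)
    (hstep : ∀ r : ℕ, 1 ≤ r →
      (lam r : ℤ) = ν r + (if x = r then 1 else 0) - (if x = -r then 1 else 0)) :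
    IsPermLattice (f + 1) (Function.update w (f + 1) x) ∧
      ∀ r : ℕ, 1 ≤ r → hatCount (Function.update w (f + 1) x) (f + 1) r = lam r := by
  set w' := Function.update w (f + 1) x
  have hagree : ∀ j, j ≤ f → w' j = w j := fun j hj => Function.update_of_ne (by omega) _ _
  have hlast : w' (f + 1) = x := Function.update_self _ _ _
  have hdiag : ∀ r : ℕ, 1 ≤ r → hatCount w' (f + 1) r = lam r := by
    intro r hr
    rw [hatCount_succ, hatCount_congr (fun j _ hj => hagree j hj), hν r hr,
      hlast, hstep r hr]
  refine ⟨⟨fun i hi1 hi => ?_, fun i hi1 hi => ?_⟩, hdiag⟩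
  · rcases (Nat.le_add_one_iff.1 hi) with hi | rfl
    · rw [hagree i hi]; exact hw.1 i hi1 hi
    · rwa [hlast]
  · rcases (Nat.le_add_one_iff.1 hi) with hi | rfl
    · simp only [hatCount_congr (fun j _ hj => hagree j (hj.trans hi))]
      exact hw.2 i hi1 hi
    · exact hatCount_le_and_nonneg_of_eq hdiag hlam

theorem IsPermLattice.degree_le_and_even {f : ℕ} {w : ℕ → ℤ} (hw : IsPermLattice f w)
    {lam : ℕ →₀ ℕ} (hlam0 : lam 0 = 0) (hd : ∀ r : ℕ, 1 ≤ r → hatCount w f r = lam r) :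
    lam.degree ≤ f ∧ Even (f - lam.degree) := by
  set B := (Icc 1 f).sup (fun j => (w j).natAbs) ⊔ lam.support.sup id
  have hwB : ∀ j ∈ Icc 1 f, (w j).natAbs ≤ B :=
    fun j hj => le_sup_of_le_left (le_sup (f := fun j => (w j).natAbs) hj)
  have hlamB : ∀ r ∈ lam.support, r ≤ B := fun r hr => le_sup_of_le_right (le_sup (f := id) hr)
  have key : (lam.degree : ℤ) = f - 2 * #{j ∈ Icc 1 f | w j < 0} := calc
    (lam.degree : ℤ) = ∑ r ∈ Icc 1 B, (lam r : ℤ) := by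
      rw [Finsupp.degree_eq_sum_Icc_one hlam0 hlamB, Nat.cast_sum]
    _ = ∑ r ∈ Icc 1 B, hatCount w f r :=
      sum_congr rfl fun r hr => (hd r (mem_Icc.1 hr).1).symm
    _ = ∑ j ∈ Icc 1 f, (w j).sign := sum_hatCount_eq_sum_sign hwB
    _ = f - 2 * #{j ∈ Icc 1 f | w j < 0} := by
      rw [sum_sign_eq_card_sub _ _ fun j hj => hw.1 j (mem_Icc.1 hj).1 (mem_Icc.1 hj).2,
        Nat.card_Icc, Nat.add_sub_cancel]
  exact ⟨by omega, ⟨#{j ∈ Icc 1 f | w j < 0}, by omega⟩⟩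

theorem exists_isPermLattice_of_le_of_even (f : ℕ) {lam : ℕ →₀ ℕ} (hlam : IsPartition lam)
    (hle : lam.degree ≤ f) (heven : Even (f - lam.degree)) :
    ∃ w : ℕ → ℤ, IsPermLattice f w ∧ ∀ r : ℕ, 1 ≤ r → hatCount w f r = lam r := by
  induction f generalizing lam with
  | zero =>
    obtain rfl : lam = 0 := (Finsupp.degree_eq_zero_iff lam).1 (by omega)
    exact ⟨0, ⟨fun i _ _ => by omega, fun i _ _ => by omega⟩, fun r _ => by simp [hatCount]⟩
  | succ f ih =>
    rcases hle.eq_or_lt with hfull | hlt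
    · obtain ⟨ℓ, μ, hℓ, rfl, hμ⟩ := hlam.exists_eq_add_single (by omega)
      have hμdeg : μ.degree = f := by simp only [map_add, Finsupp.degree_single] at hfull; omega
      obtain ⟨w, hw, hwμ⟩ := ih hμ hμdeg.le (by simp [hμdeg])
      refine ⟨_, hw.update_succ (x := ℓ) (by omega) hwμ hlam.2 fun r hr => ?_⟩
      grind [Finsupp.add_apply]
    · obtain ⟨k, hk⟩ := heven
      have hνdeg : (lam + Finsupp.single 1 1).degree = lam.degree + 1 := by
        rw [map_add, Finsupp.degree_single]
      obtain ⟨w, hw, hwν⟩ := ih hlam.add_single_one (by omega) ⟨k - 1, by omega⟩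
      refine ⟨_, hw.update_succ (x := -1) (by norm_num) hwν hlam.2 fun r hr => ?_⟩
      grind [Finsupp.add_apply]

/-- Let `f ≥ 0` and let `λ` be a partition (a finitely supported
weakly decreasing function, `1`-based, with `|λ|` its number of boxes).  There exists a
permutation lattice of order `f` with diagram `λ` if and only if `|λ| ≤ f` and
`f − |λ|` is even. -/
theorem exists_permLattice_iff (f : ℕ)
    (lam : ℕ →₀ ℕ) (hlam0 : lam 0 = 0)
    (hlam : ∀ r : ℕ, 1 ≤ r → lam (r + 1) ≤ lam r) :
    (∃ w : ℕ → ℤ, IsPermLattice f w ∧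
        ∀ r : ℕ, 1 ≤ r → hatCount w f (r : ℤ) = (lam r : ℤ)) ↔
      (lam.sum fun _ n => n) ≤ f ∧ Even (f - lam.sum fun _ n => n) := by
  constructor
  · rintro ⟨w, hw, hd⟩
    exact hw.degree_le_and_even hlam0 hd
  · rintro ⟨hle, heven⟩
    exact exists_isPermLattice_of_le_of_even f ⟨hlam0, hlam⟩ hle heven
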